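/- Let (A, R) be a Rota-Baxter algebra of weight zero and define ω₂(x,y,z) = x·R(y·R(z)), ω₃(x,y,z) = x·R(R(y)·z), ω₅(x,y,z) = R(x·R(y))·z. Then for all v, w, x, y, z ∈ A one has ω₁'(v,(w,x,y),z) identity: ω₂(v, ω₂(w,x,y), z) = ω₂(v, w, ω₂(x,y,z)) + ω₂(v, w, ω₃(x,y,z)) + ω₂(v, w, ω₅(x,y,z)). -/
import Mathlib

theorem STMT {A : Type*} [NonUnitalRing A] [Module ℚ A]
    [SMulCommClass ℚ A A] [IsScalarTower ℚ A A]
    (R : A →ₗ[ℚ] A)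
    (hR : ∀ x y : A, R x * R y = R (R x * y) + R (x * R y)) :
    ∀ v w x y z : A,
      (fun x y z : A => x * R (y * R z)) v ((fun x y z : A => x * R (y * R z)) w x y) z = (fun x y z : A => x * R (y * R z)) v w ((fun x y z : A => x * R (y * R z)) x y z) + (fun x y z : A => x * R (y * R z)) v w ((fun x y z : A => x * R (R y * z)) x y z) + (fun x y z : A => x * R (y * R z)) v w ((fun x y z : A => R (x * R y) * z) x y z) := by
  intro v w x y z
  simp only
  have h1 : (x * R y) * R z = x * R (R y * z) + x * R (y * R z) := by
    rw [mul_assoc, hR y z, mul_add]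
  have key : (w * R (x * R y)) * R z
      = w * R (x * R (y * R z)) + w * R (x * R (R y * z)) + w * R (R (x * R y) * z) := by
    rw [mul_assoc, hR (x * R y) z, h1, map_add, mul_add, mul_add]
    abel
  rw [key, map_add, map_add, mul_add, mul_add]
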